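/- arXiv:2409.00865 — 4 statements merged into one kernel-verified Lean document; each statement's English description precedes it below -/
import Mathlib

section
/- The entanglement-of-formation function E is strictly increasing on [0,1], and E(0) = 0 and E(1) = 1. -/
/-- Binary Shannon entropy (base 2), with the convention `0 * log₂ 0 = 0`
(automatic since `Real.logb 2 0 = 0`). -/
noncomputable def binEntropy (p : ℝ) : ℝ :=
  -p * Real.logb 2 p - (1 - p) * Real.logb 2 (1 - p)

/-- Entanglement-of-formation function of the concurrence `C`. -/
noncomputable def eof (C : ℝ) : ℝ :=
  binEntropy ((1 + Real.sqrt (1 - C ^ 2)) / 2)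

/-! `E` is the base-2 binary entropy composed with `C ↦ (1 + √(1 - C²)) / 2`, which decreases
strictly from `1` to `1/2` on `[0, 1]`; since the binary entropy decreases strictly on
`[1/2, 1]`, the composite increases strictly, from `h(1) = 0` to `h(1/2) = 1`. -/

lemma binEntropy_eq_real_binEntropy_div_log_two (p : ℝ) :
    binEntropy p = Real.binEntropy p / Real.log 2 := by
  simp only [binEntropy, Real.binEntropy, Real.logb, Real.log_inv]
  ring

lemma strictAntiOn_one_add_sqrt_one_sub_sq_div_two :
    StrictAntiOn (fun C : ℝ ↦ (1 + √(1 - C ^ 2)) / 2) (Set.Icc 0 1) := by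
  intro a ha b hb hab
  have hsqrt : √(1 - b ^ 2) < √(1 - a ^ 2) :=
    Real.sqrt_lt_sqrt (by nlinarith [hb.1, hb.2]) (by nlinarith [ha.1])
  dsimp only
  linarith

lemma mapsTo_one_add_sqrt_one_sub_sq_div_two :
    Set.MapsTo (fun C : ℝ ↦ (1 + √(1 - C ^ 2)) / 2) (Set.Icc 0 1) (Set.Icc 2⁻¹ 1) := by
  intro C hC
  have hle : √(1 - C ^ 2) ≤ 1 := Real.sqrt_le_one.mpr (by nlinarith [hC.1])
  constructor <;> linarith [Real.sqrt_nonneg (1 - C ^ 2)]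

/-- The entanglement-of-formation function `E` is strictly increasing on `[0,1]`,
and `E 0 = 0` and `E 1 = 1`. -/
theorem eof_strictMonoOn_and_boundary :
    StrictMonoOn eof (Set.Icc (0 : ℝ) 1) ∧ eof 0 = 0 ∧ eof 1 = 1 := by
  have hlnEntropy : StrictMonoOn (Real.binEntropy ∘ fun C : ℝ ↦ (1 + √(1 - C ^ 2)) / 2)
      (Set.Icc 0 1) :=
    Real.binEntropy_strictAntiOn.comp strictAntiOn_one_add_sqrt_one_sub_sq_div_two
      mapsTo_one_add_sqrt_one_sub_sq_div_two
  refine ⟨fun a ha b hb hab ↦ ?_, ?_, ?_⟩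
  · simp only [eof, binEntropy_eq_real_binEntropy_div_log_two]
    exact div_lt_div_of_pos_right (hlnEntropy ha hb hab) (Real.log_pos one_lt_two)
  · simp [eof, binEntropy_eq_real_binEntropy_div_log_two]
  · simp [eof, binEntropy_eq_real_binEntropy_div_log_two, (Real.log_pos one_lt_two).ne']
end

section
/- Let x, y, z > 0 and t ≥ 0 with x + y + z + t = 1. Define the three-qubit pure state ψ : Fin 2 × Fin 2 × Fin 2 → ℂ by ψ(0,0,0) = √t, ψ(1,0,0) = √x, ψ(0,1,0) = √y, ψ(0,0,1) = √z, and ψ = 0 on all other basis indices. Define the reduced density matrix ρ_A ∈ Matrix (Fin 2) (Fin 2) ℂ of the first qubit by (ρ_A)ᵢⱼ = Σ_{b,c} ψ(i,b,c)·conj(ψ(j,b,c)). Then 4·det ρ_A = (2√(xy))² + (2√(xz))², i.e. 4·det ρ_A = 4xy + 4xz. (This expresses that W-class states have zero tangle: the squared concurrence of the 1|23 bipartition, C²_{1|23} = 4·det ρ_A, equals C²₁₂ + C²₁₃ where C₁₂ = 2√(xy) and C₁₃ = 2√(xz) are the concurrences of the reduced two-qubit states.) -/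
open scoped ComplexConjugate

/-- The W-class pure state `√t|000⟩ + √x|100⟩ + √y|010⟩ + √z|001⟩`. -/
noncomputable def wState (x y z t : ℝ) : Fin 2 × Fin 2 × Fin 2 → ℂ :=
  fun p =>
    if p = (0, 0, 0) then (Real.sqrt t : ℝ)
    else if p = (1, 0, 0) then (Real.sqrt x : ℝ)
    else if p = (0, 1, 0) then (Real.sqrt y : ℝ)
    else if p = (0, 0, 1) then (Real.sqrt z : ℝ)
    else 0

/-- The reduced density matrix of the first qubit. -/
noncomputable def rhoA (x y z t : ℝ) : Matrix (Fin 2) (Fin 2) ℂ :=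
  Matrix.of fun i j => ∑ b : Fin 2, ∑ c : Fin 2,
    wState x y z t (i, b, c) * conj (wState x y z t (j, b, c))

theorem rhoA_eq (x y z t : ℝ) :
    rhoA x y z t = !![((√t ^ 2 + √z ^ 2 + √y ^ 2 : ℝ) : ℂ), ((√t * √x : ℝ) : ℂ);
      ((√x * √t : ℝ) : ℂ), ((√x ^ 2 : ℝ) : ℂ)] := by
  ext i j
  fin_cases i <;> fin_cases j <;>
    simp [rhoA, wState, Fin.sum_univ_two, pow_two, Complex.conj_ofReal]

theorem det_rhoA (x y z t : ℝ) :
    (rhoA x y z t).det = (((√z ^ 2 + √y ^ 2) * √x ^ 2 : ℝ) : ℂ) := by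
  rw [rhoA_eq, Matrix.det_fin_two_of]
  push_cast
  ring

theorem wState_zero_tangle_general (x y z t : ℝ) (hx : 0 < x) (hy : 0 < y) (hz : 0 < z) :
    4 * (rhoA x y z t).det = (4 * x * y + 4 * x * z : ℝ) := by
  rw [det_rhoA, Real.sq_sqrt hx.le, Real.sq_sqrt hy.le, Real.sq_sqrt hz.le]
  push_cast
  ring

/-- W-class states have zero tangle: `4·det ρ_A = C₁₂² + C₁₃² = 4xy + 4xz`. -/
theorem wState_zero_tangle (x y z t : ℝ) (hx : 0 < x) (hy : 0 < y) (hz : 0 < z)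
    (ht : 0 ≤ t) (hsum : x + y + z + t = 1) :
    4 * (rhoA x y z t).det = (4 * x * y + 4 * x * z : ℝ) :=
  wState_zero_tangle_general x y z t hx hy hz
end

section
/- There exist g₁, g₂ ∈ (0,1/2) such that (1−4g₁g₂)² > E(2g₂√(1−4g₁²))² + E(2g₁√(1−4g₂²))², and there exist g₁, g₂ ∈ (0,1/2) such that (1−4g₁g₂)² < E(2g₂√(1−4g₁²))² + E(2g₁√(1−4g₂²))². (For non-generic GHZ-class states ψ(g₁,g₂,0,r) with r = 1, the source-entanglement monogamy relation E_s² ≥ E₁₂² + E₁₃² + E₂₃² is satisfied for some parameter values and violated for others.) -/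
/-!
Both witnesses lie on the diagonal `g₁ = g₂ = g`, where `E₁₃ = E₂₃ = E(C)` with
`C² = 4g²(1 - 4g²)`. The elementary bounds `x(1 - x) ≤ -x log x ≤ min (1 - x) (2√x)` give
`C² / (2 log 2) ≤ E(C) ≤ (C²/2 + 2C) / log 2`. For small `g` the upper bound makes `2 E(C)²`
much smaller than `E_s² ≈ 1`; as `4g² → 1` both `E_s = 1 - 4g²` and `C²` are of order
`1 - 4g²`, and the lower bound makes `2 E(C)² ≈ E_s² / (2 (log 2)²)` exceed `E_s²`.
-/

open Real hiding binEntropy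

lemma binEntropy_eq_negMulLog_div_log_two (p : ℝ) :
    binEntropy p = (negMulLog p + negMulLog (1 - p)) / log 2 := by
  simp only [binEntropy, negMulLog, logb]
  ring

lemma mul_one_sub_self_le_negMulLog {x : ℝ} (hx : 0 ≤ x) : x * (1 - x) ≤ negMulLog x := by
  rcases hx.eq_or_lt with rfl | hx
  · simp
  · rw [negMulLog]
    nlinarith [log_le_sub_one_of_pos hx]

lemma negMulLog_le_two_mul_sqrt {x : ℝ} (hx : 0 ≤ x) : negMulLog x ≤ 2 * √x := by
  rcases hx.eq_or_lt with rfl | hx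
  · simp
  · have hs : 0 < √x := sqrt_pos.2 hx
    have hlog : 1 - (√x)⁻¹ ≤ log √x := one_sub_inv_le_log_of_pos hs
    rw [log_sqrt hx.le] at hlog
    have hx_div : x * (√x)⁻¹ = √x := div_sqrt
    rw [negMulLog]
    nlinarith [mul_le_mul_of_nonneg_left hlog hx.le]

lemma half_one_add_sqrt_mul_one_sub {C : ℝ} (hC : C ^ 2 ≤ 1) :
    (1 + √(1 - C ^ 2)) / 2 * (1 - (1 + √(1 - C ^ 2)) / 2) = C ^ 2 / 4 := by
  nlinarith [sq_sqrt (sub_nonneg.2 hC)]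

lemma sq_div_two_log_two_le_eof {C : ℝ} (hC : C ^ 2 ≤ 1) : C ^ 2 / (2 * log 2) ≤ eof C := by
  set p := (1 + √(1 - C ^ 2)) / 2 with hp
  have hp0 : 0 ≤ p := by positivity
  have hp1 : p ≤ 1 := by
    have : √(1 - C ^ 2) ≤ 1 := sqrt_le_one.2 (by linarith [sq_nonneg C])
    linarith
  have hpq : p * (1 - p) = C ^ 2 / 4 := half_one_add_sqrt_mul_one_sub hC
  rw [eof, binEntropy_eq_negMulLog_div_log_two, div_le_div_iff₀ (by positivity) (by positivity)]
  have := mul_one_sub_self_le_negMulLog hp0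
  have := mul_one_sub_self_le_negMulLog (sub_nonneg.2 hp1)
  nlinarith [log_pos one_lt_two]

lemma eof_nonneg {C : ℝ} (hC : C ^ 2 ≤ 1) : 0 ≤ eof C :=
  le_trans (by positivity [log_pos one_lt_two]) (sq_div_two_log_two_le_eof hC)

lemma eof_le {C : ℝ} (hC : C ^ 2 ≤ 1) : eof C ≤ (C ^ 2 / 2 + 2 * |C|) / log 2 := by
  rw [eof, binEntropy_eq_negMulLog_div_log_two]
  set s := √(1 - C ^ 2)
  have hss : s ^ 2 = 1 - C ^ 2 := sq_sqrt (sub_nonneg.2 hC)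
  have hs0 : 0 ≤ s := sqrt_nonneg _
  have hs1 : s ≤ 1 := by nlinarith
  have hq : 1 - (1 + s) / 2 ≤ C ^ 2 / 2 := by nlinarith
  have hsqrt_q : √(1 - (1 + s) / 2) ≤ |C| := by
    rw [← sqrt_sq_eq_abs]
    exact sqrt_le_sqrt (by linarith [sq_nonneg C])
  have h1 := negMulLog_le_one_sub_self (x := (1 + s) / 2) (by positivity)
  have h2 := negMulLog_le_two_mul_sqrt (x := 1 - (1 + s) / 2) (by linarith)
  gcongr
  · linarith
  · linarith

lemma concurrence_sq {g : ℝ} (hg : 4 * g ^ 2 ≤ 1) :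
    (2 * g * √(1 - 4 * g ^ 2)) ^ 2 = 4 * g ^ 2 * (1 - 4 * g ^ 2) := by
  rw [mul_pow, sq_sqrt (by linarith)]
  ring

lemma two_mul_eof_concurrence_sq_lt {g : ℝ} (hg0 : 0 ≤ g) (hg : g ≤ 1 / 20) :
    2 * eof (2 * g * √(1 - 4 * g ^ 2)) ^ 2 < (1 - 4 * g ^ 2) ^ 2 := by
  set C := 2 * g * √(1 - 4 * g ^ 2)
  have hC0 : 0 ≤ C := by positivity
  have hC : C ≤ 1 / 10 := by
    have : √(1 - 4 * g ^ 2) ≤ 1 := sqrt_le_one.2 (by nlinarith)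
    nlinarith
  have hC2 : C ^ 2 ≤ 1 := by nlinarith
  have hnn := eof_nonneg hC2
  have hle : eof C ≤ (41 / 200) / log 2 := by
    refine (eof_le hC2).trans ?_
    rw [abs_of_nonneg hC0]
    gcongr
    nlinarith
  have hlt : eof C < 3 / 10 := by
    rw [le_div_iff₀ (log_pos one_lt_two)] at hle
    nlinarith [log_two_gt_d9]
  nlinarith

lemma lt_two_mul_eof_concurrence_sq {g : ℝ} (hg : 99 / 100 ≤ 4 * g ^ 2) (hg' : 4 * g ^ 2 < 1) :
    (1 - 4 * g ^ 2) ^ 2 < 2 * eof (2 * g * √(1 - 4 * g ^ 2)) ^ 2 := by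
  set C := 2 * g * √(1 - 4 * g ^ 2)
  have hC2 : C ^ 2 = 4 * g ^ 2 * (1 - 4 * g ^ 2) := concurrence_sq hg'.le
  have hge := sq_div_two_log_two_le_eof (C := C) (by nlinarith)
  have hnn := eof_nonneg (C := C) (by nlinarith)
  rw [div_le_iff₀ (by positivity [log_pos one_lt_two])] at hge
  have hlog : log 2 < 7 / 10 := by linarith [log_two_lt_d9]
  -- the threshold `99/100` is what makes `2 (99/100)² > (7/5)²`
  have hlin : 99 / 100 * (1 - 4 * g ^ 2) ≤ 7 / 5 * eof C := by nlinarith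
  nlinarith

/-- For non-generic GHZ-class states `ψ(g₁,g₂,0,1)`, the source-entanglement
monogamy relation is satisfied for some parameter values and violated for others. -/
theorem source_monogamy_sometimes_holds_sometimes_fails :
    (∃ g₁ ∈ Set.Ioo (0 : ℝ) (1 / 2), ∃ g₂ ∈ Set.Ioo (0 : ℝ) (1 / 2),
      (1 - 4 * g₁ * g₂) ^ 2 >
        (eof (2 * g₂ * Real.sqrt (1 - 4 * g₁ ^ 2))) ^ 2 +
        (eof (2 * g₁ * Real.sqrt (1 - 4 * g₂ ^ 2))) ^ 2) ∧
    (∃ g₁ ∈ Set.Ioo (0 : ℝ) (1 / 2), ∃ g₂ ∈ Set.Ioo (0 : ℝ) (1 / 2),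
      (1 - 4 * g₁ * g₂) ^ 2 <
        (eof (2 * g₂ * Real.sqrt (1 - 4 * g₁ ^ 2))) ^ 2 +
        (eof (2 * g₁ * Real.sqrt (1 - 4 * g₂ ^ 2))) ^ 2) := by
  have hsmall := two_mul_eof_concurrence_sq_lt (g := 1 / 20) (by norm_num) le_rfl
  have hlarge := lt_two_mul_eof_concurrence_sq (g := 499 / 1000) (by norm_num) (by norm_num)
  refine ⟨⟨1 / 20, by norm_num, 1 / 20, by norm_num, ?_⟩,
    ⟨499 / 1000, by norm_num, 499 / 1000, by norm_num, ?_⟩⟩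
  · linarith
  · linarith
end

section
/- There exists g ∈ (0,1/2) such that ((1/2 − g)³)² < 3·E(2g(1−4g²)/(1+8g³))². (For states from MES₃ of the form (1/√k)·g_x¹⊗g_x²⊗g_x³|GHZ⟩ with g₁ = g₂ = g₃ = g ≠ 0, the accessible-entanglement monogamy relation E_a² ≥ E₁₂² + E₁₃² + E₂₃² is violated for some parameter values.) -/
lemma one_sub_le_binEntropy {p : ℝ} (hp₀ : 1 / 2 ≤ p) (hp₁ : p ≤ 1) :
    1 - p ≤ binEntropy p := by
  have hmajor : 0 ≤ -p * Real.logb 2 p := by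
    nlinarith [Real.logb_nonpos (b := 2) (by norm_num) (by linarith) hp₁]
  have hminor : 1 - p ≤ -(1 - p) * Real.logb 2 (1 - p) := by
    rcases (sub_nonneg.mpr hp₁).eq_or_lt with hq | hq
    · rw [← hq]; simp
    · have hlog : Real.logb 2 (1 - p) ≤ -1 := calc
        Real.logb 2 (1 - p) ≤ Real.logb 2 2⁻¹ :=
          Real.logb_le_logb_of_le (by norm_num) hq (by linarith)
        _ = -1 := by rw [Real.logb_inv, Real.logb_self_eq_one one_lt_two]
      nlinarith
  unfold binEntropy
  linarith

lemma one_sub_sqrt_one_sub_sq_div_two_le_eof (C : ℝ) :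
    (1 - Real.sqrt (1 - C ^ 2)) / 2 ≤ eof C := by
  have hs₁ : Real.sqrt (1 - C ^ 2) ≤ 1 :=
    Real.sqrt_le_one.mpr (by nlinarith [sq_nonneg C])
  have h := one_sub_le_binEntropy (p := (1 + Real.sqrt (1 - C ^ 2)) / 2)
    (by linarith [Real.sqrt_nonneg (1 - C ^ 2)]) (by linarith)
  unfold eof
  linarith

lemma one_div_thirty_six_le_eof_one_third : 1 / 36 ≤ eof (1 / 3) := by
  have hs : Real.sqrt (1 - (1 / 3 : ℝ) ^ 2) ≤ 17 / 18 :=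
    (Real.sqrt_le_left (by norm_num)).mpr (by norm_num)
  linarith [one_sub_sqrt_one_sub_sq_div_two_le_eof (1 / 3)]

/-- For states from MES₃ of the form `(1/√k)·g_x¹⊗g_x²⊗g_x³|GHZ⟩` with
`g₁ = g₂ = g₃ = g ≠ 0`, the accessible-entanglement monogamy relation
`E_a² ≥ E₁₂² + E₁₃² + E₂₃²` is violated for some parameter values. -/
theorem exists_accessible_monogamy_violation_mes :
    ∃ g ∈ Set.Ioo (0 : ℝ) (1 / 2),
      ((1 / 2 - g) ^ 3) ^ 2 < 3 * (eof (2 * g * (1 - 4 * g ^ 2) / (1 + 8 * g ^ 3))) ^ 2 := by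
  refine ⟨1 / 4, ⟨by norm_num, by norm_num⟩, ?_⟩
  have hC : 2 * (1 / 4 : ℝ) * (1 - 4 * (1 / 4) ^ 2) / (1 + 8 * (1 / 4) ^ 3) = 1 / 3 := by
    norm_num
  rw [hC]
  calc ((1 / 2 - 1 / 4 : ℝ) ^ 3) ^ 2 < 3 * (1 / 36) ^ 2 := by norm_num
    _ ≤ 3 * eof (1 / 3) ^ 2 := by gcongr; exact one_div_thirty_six_le_eof_one_third
end
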